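/- Let w : ZMod m → ℤ² be a closed squared spiral on m vertices that is a window (all turns have the same sign) and whose associated pair (S⁰, S¹) is an hv-convex switching. Then there exists a point x ∈ ℝ², not lying on any horizontal or vertical line through a vertex of the spiral, such that each of the four closed quadrants Z_i(x) ⊆ ℝ², i = 0,1,2,3, contains exactly m/4 vertices of the spiral. -/

import Mathlib

/-- The four quadrant regions `Z_i(v)` in `ℤ²`. -/
def Zq (i : Fin 4) (v : ℤ × ℤ) : Set (ℤ × ℤ) :=
  match i with
  | 0 => {p | p.1 ≤ v.1 ∧ p.2 ≤ v.2}
  | 1 => {p | v.1 ≤ p.1 ∧ p.2 ≤ v.2}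
  | 2 => {p | v.1 ≤ p.1 ∧ v.2 ≤ p.2}
  | 3 => {p | p.1 ≤ v.1 ∧ v.2 ≤ p.2}

/-- Horizontal projection: the number of points of `S` on the horizontal line `y = c`. -/
noncomputable def hProj (S : Set (ℤ × ℤ)) (c : ℤ) : ℕ := {p ∈ S | p.2 = c}.ncard

/-- Vertical projection: the number of points of `S` on the vertical line `x = c`. -/
noncomputable def vProj (S : Set (ℤ × ℤ)) (c : ℤ) : ℕ := {p ∈ S | p.1 = c}.ncard

/-- An hv-switching: a pair of disjoint finite sets of equal cardinality having the same
horizontal and vertical projections. -/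
def IsHvSwitching (S0 S1 : Set (ℤ × ℤ)) : Prop :=
  S0.Finite ∧ S1.Finite ∧ Disjoint S0 S1 ∧ S0.ncard = S1.ncard ∧
    (∀ c : ℤ, hProj S0 c = hProj S1 c) ∧ (∀ c : ℤ, vProj S0 c = vProj S1 c)

/-- An hv-convex switching: an hv-switching in which every point has a free region,
i.e. a quadrant containing no point of the other component. -/
def IsHvConvexSwitching (S0 S1 : Set (ℤ × ℤ)) : Prop :=
  IsHvSwitching S0 S1 ∧ (∀ x ∈ S0, ∃ i : Fin 4, Zq i x ∩ S1 = ∅) ∧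
    (∀ x ∈ S1, ∃ i : Fin 4, Zq i x ∩ S0 = ∅)

/-- A closed squared spiral on `m` vertices: an injective closed lattice path whose
segments are alternately horizontal (from even-indexed vertices) and vertical
(from odd-indexed vertices). -/
structure IsClosedSquaredSpiral {m : ℕ} (w : ZMod m → ℤ × ℤ) : Prop where
  even_m : Even m
  four_le : 4 ≤ m
  inj : Function.Injective w
  horiz : ∀ i : ZMod m, Even i.val → (w (i + 1)).2 = (w i).2 ∧ (w (i + 1)).1 ≠ (w i).1
  vert : ∀ i : ZMod m, ¬ Even i.val → (w (i + 1)).1 = (w i).1 ∧ (w (i + 1)).2 ≠ (w i).2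

/-- The turn `d(i) = u₁v₂ − u₂v₁` at vertex `i`, where `u = w i − w (i−1)` and
`v = w (i+1) − w i`. -/
def turn {m : ℕ} (w : ZMod m → ℤ × ℤ) (i : ZMod m) : ℤ :=
  ((w i).1 - (w (i - 1)).1) * ((w (i + 1)).2 - (w i).2)
    - ((w i).2 - (w (i - 1)).2) * ((w (i + 1)).1 - (w i).1)

/-- A window: a squared spiral all of whose turns have the same sign. -/
def IsWindow {m : ℕ} (w : ZMod m → ℤ × ℤ) : Prop :=
  (∀ i : ZMod m, 0 < turn w i) ∨ (∀ i : ZMod m, turn w i < 0)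

/-- The even-indexed vertices of a spiral. -/
def spiralEven {m : ℕ} (w : ZMod m → ℤ × ℤ) : Set (ℤ × ℤ) := w '' {i | Even i.val}

/-- The odd-indexed vertices of a spiral. -/
def spiralOdd {m : ℕ} (w : ZMod m → ℤ × ℤ) : Set (ℤ × ℤ) := w '' {i | ¬ Even i.val}

/-- The four quadrant regions `Z_i(x)` in `ℝ²`. -/
def ZqR (i : Fin 4) (x : ℝ × ℝ) : Set (ℝ × ℝ) :=
  match i with
  | 0 => {p | p.1 ≤ x.1 ∧ p.2 ≤ x.2}
  | 1 => {p | x.1 ≤ p.1 ∧ p.2 ≤ x.2}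
  | 2 => {p | x.1 ≤ p.1 ∧ x.2 ≤ p.2}
  | 3 => {p | p.1 ≤ x.1 ∧ x.2 ≤ p.2}

/-- The embedding of `ℤ²` into `ℝ²`. -/
def toR (p : ℤ × ℤ) : ℝ × ℝ := ((p.1 : ℝ), (p.2 : ℝ))

/-!
Every vertex `i` of the spiral has a horizontal neighbour at offset `hOffset w i` and a vertical
neighbour at offset `vOffset w i`; the signs of the two offsets sort the vertices into four
classes `corner w j`. The turn at `i` is `± hOffset w i * vOffset w i`, the sign given by the
parity of `i`, so in a window the sign of this product determines the parity. Hence passing to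
the horizontal (vertical) neighbour flips the sign of the horizontal (vertical) offset only, and
these two involutions show that the four classes have `m / 4` elements each.

By hv-convexity every vertex has a quadrant free of vertices of the other parity; for a vertex of
`corner w j` this can only be `Z_j`, as the other three quadrants contain a neighbour. Comparing
the free quadrants of classes of opposite parity, all vertices with positive horizontal offset lie
strictly to the left of all vertices with negative horizontal offset, and all vertices with
positive vertical offset strictly below those with negative vertical offset. A point with
half-integer coordinates between them cuts out exactly the four classes.
-/

open Function Set

lemma ZMod.even_val_add_one_iff {m : ℕ} [NeZero m] (hm : Even m) (i : ZMod m) :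
    Even (i + 1).val ↔ ¬ Even i.val := by
  have hm1 : 1 < m := by
    obtain ⟨k, rfl⟩ := hm
    have := NeZero.ne (k + k)
    omega
  rw [ZMod.val_add, ZMod.val_one_eq_one_mod, Nat.mod_eq_of_lt hm1, Nat.even_iff, Nat.even_iff,
    Nat.mod_mod_of_dvd _ hm.two_dvd]
  omega

lemma ZMod.even_val_sub_one_iff {m : ℕ} [NeZero m] (hm : Even m) (i : ZMod m) :
    Even (i - 1).val ↔ ¬ Even i.val := by
  rw [← not_iff_not, not_not, ← ZMod.even_val_add_one_iff hm, sub_add_cancel]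

lemma Function.Involutive.ncard_preimage {α : Type*} {f : α → α} (hf : Involutive f)
    (s : Set α) : (f ⁻¹' s).ncard = s.ncard :=
  ncard_preimage_of_injective_subset_range hf.injective (by simp [hf.surjective.range_eq])

section HalfIntegers

variable {K : Type*} [Field K] [LinearOrder K] [IsStrictOrderedRing K] (a M : ℤ)

lemma Int.cast_le_add_half_iff : (a : K) ≤ M + 1 / 2 ↔ a ≤ M := by
  constructor
  · intro h
    by_contra! hlt
    have : (M : K) + 1 ≤ a := by exact_mod_cast hlt
    linarith
  · intro h
    have : (a : K) ≤ M := by exact_mod_cast h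
    linarith

lemma Int.add_half_ne_cast : (M : K) + 1 / 2 ≠ a := by
  intro h
  have : ((2 * M + 1 : ℤ) : K) = (2 * a : ℤ) := by push_cast; linarith
  have := Int.cast_injective this
  omega

lemma Int.add_half_le_cast_iff : (M : K) + 1 / 2 ≤ a ↔ M < a := by
  rw [le_iff_lt_or_eq, or_iff_left (Int.add_half_ne_cast a M), ← not_le,
    Int.cast_le_add_half_iff, not_le]

end HalfIntegers

lemma exists_le_iff_of_forall_lt {ι : Type*} [Finite ι] (f : ι → ℤ) (P : ι → Prop)
    (h : ∀ i j, P i → ¬ P j → f i < f j) : ∃ M : ℤ, ∀ i, f i ≤ M ↔ P i := by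
  by_cases hP : ∃ i, P i
  · obtain ⟨i₀, hi₀, hmax⟩ := Set.exists_max_image {i | P i} f (Set.toFinite _) hP
    exact ⟨f i₀, fun i => ⟨fun hi => by_contra fun hPi => (h i₀ i hi₀ hPi).not_ge hi,
      hmax i⟩⟩
  · obtain ⟨L, hL⟩ := (Set.finite_range f).bddBelow
    refine ⟨L - 1, fun i => iff_of_false ?_ fun hi => hP ⟨i, hi⟩⟩
    have := hL (Set.mem_range_self i)
    omega

lemma fst_lt_of_notMem_Zq {u v : ℤ × ℤ} (h0 : v ∉ Zq 0 u) (h1 : u ∉ Zq 1 v) : u.1 < v.1 := by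
  by_contra! h
  rcases le_total v.2 u.2 with h' | h'
  exacts [h0 ⟨h, h'⟩, h1 ⟨h, h'⟩]

lemma snd_lt_of_notMem_Zq {u v : ℤ × ℤ} (h1 : v ∉ Zq 1 u) (h2 : u ∉ Zq 2 v) : u.2 < v.2 := by
  by_contra! h
  rcases le_total u.1 v.1 with h' | h'
  exacts [h1 ⟨h', h⟩, h2 ⟨h', h⟩]

section Spiral

variable {m : ℕ}

-- The other ends of the horizontal and the vertical segment at `i`: the segment leaving an even
-- vertex is horizontal, the one leaving an odd vertex vertical.
def hNbr (i : ZMod m) : ZMod m := if Even i.val then i + 1 else i - 1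

def vNbr (i : ZMod m) : ZMod m := if Even i.val then i - 1 else i + 1

variable (w : ZMod m → ℤ × ℤ)

def hOffset (i : ZMod m) : ℤ := (w (hNbr i)).1 - (w i).1

def vOffset (i : ZMod m) : ℤ := (w (vNbr i)).2 - (w i).2

/-- The vertices `i` both of whose neighbours lie outside the quadrant `Zq j (w i)`; e.g.
`corner w 0` consists of the lower left corners of the spiral. -/
def corner (j : Fin 4) : Set (ZMod m) :=
  match j with
  | 0 => {i | 0 < hOffset w i ∧ 0 < vOffset w i}
  | 1 => {i | hOffset w i < 0 ∧ 0 < vOffset w i}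
  | 2 => {i | hOffset w i < 0 ∧ vOffset w i < 0}
  | 3 => {i | 0 < hOffset w i ∧ vOffset w i < 0}

end Spiral

namespace IsClosedSquaredSpiral

variable {m : ℕ} {w : ZMod m → ℤ × ℤ} (hw : IsClosedSquaredSpiral w)
include hw

lemma neZero : NeZero m := ⟨by have := hw.four_le; omega⟩

lemma even_hNbr_iff (i : ZMod m) : Even (hNbr i).val ↔ ¬ Even i.val := by
  have := hw.neZero
  unfold hNbr
  split
  · exact ZMod.even_val_add_one_iff hw.even_m i
  · exact ZMod.even_val_sub_one_iff hw.even_m i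

lemma even_vNbr_iff (i : ZMod m) : Even (vNbr i).val ↔ ¬ Even i.val := by
  have := hw.neZero
  unfold vNbr
  split
  · exact ZMod.even_val_sub_one_iff hw.even_m i
  · exact ZMod.even_val_add_one_iff hw.even_m i

lemma hNbr_involutive : Involutive (hNbr : ZMod m → ZMod m) := by
  intro i
  have := hw.even_hNbr_iff i
  unfold hNbr at *
  split_ifs at * <;> simp_all

lemma vNbr_involutive : Involutive (vNbr : ZMod m → ZMod m) := by
  intro i
  have := hw.even_vNbr_iff i
  unfold vNbr at *
  split_ifs at * <;> simp_all

lemma hNbr_horizontal (i : ZMod m) : (w (hNbr i)).2 = (w i).2 ∧ (w (hNbr i)).1 ≠ (w i).1 := by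
  have := hw.neZero
  unfold hNbr
  split_ifs with h
  · exact hw.horiz i h
  · have := hw.horiz (i - 1) ((ZMod.even_val_sub_one_iff hw.even_m i).2 h)
    rw [sub_add_cancel] at this
    exact ⟨this.1.symm, this.2.symm⟩

lemma vNbr_vertical (i : ZMod m) : (w (vNbr i)).1 = (w i).1 ∧ (w (vNbr i)).2 ≠ (w i).2 := by
  have := hw.neZero
  unfold vNbr
  split_ifs with h
  · have := hw.vert (i - 1) (by rw [ZMod.even_val_sub_one_iff hw.even_m i]; exact not_not.2 h)
    rw [sub_add_cancel] at this
    exact ⟨this.1.symm, this.2.symm⟩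
  · exact hw.vert i h

lemma hOffset_ne_zero (i : ZMod m) : hOffset w i ≠ 0 :=
  sub_ne_zero.2 (hw.hNbr_horizontal i).2

lemma vOffset_ne_zero (i : ZMod m) : vOffset w i ≠ 0 :=
  sub_ne_zero.2 (hw.vNbr_vertical i).2

lemma hOffset_hNbr (i : ZMod m) : hOffset w (hNbr i) = -hOffset w i := by
  rw [hOffset, hOffset, hw.hNbr_involutive i]; ring

lemma vOffset_vNbr (i : ZMod m) : vOffset w (vNbr i) = -vOffset w i := by
  rw [vOffset, vOffset, hw.vNbr_involutive i]; ring

lemma turn_eq (i : ZMod m) :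
    turn w i = if Even i.val then hOffset w i * vOffset w i else -(hOffset w i * vOffset w i) := by
  have hh := (hw.hNbr_horizontal i).1
  have hv := (hw.vNbr_vertical i).1
  unfold hOffset vOffset
  unfold hNbr vNbr at *
  split_ifs at * with h
  · rw [turn, hv, hh]; ring
  · rw [turn, hv, hh]; ring

lemma sum_ncard_corner : ∑ j : Fin 4, (corner w j).ncard = m := by
  have := hw.neZero
  have hpos : corner w 0 ∪ corner w 3 = {i | 0 < hOffset w i} := by
    ext i
    have := hw.vOffset_ne_zero i
    simp only [corner, mem_union, mem_ofPred_eq]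
    omega
  have hneg : corner w 1 ∪ corner w 2 = {i | 0 < hOffset w i}ᶜ := by
    ext i
    have := hw.hOffset_ne_zero i
    have := hw.vOffset_ne_zero i
    simp only [corner, mem_union, mem_ofPred_eq, mem_compl_iff]
    omega
  have h03 : Disjoint (corner w 0) (corner w 3) :=
    disjoint_left.2 fun i h0 h3 => (h0.2.trans h3.2).false
  have h12 : Disjoint (corner w 1) (corner w 2) :=
    disjoint_left.2 fun i h1 h2 => (h2.2.trans h1.2).false
  have := ncard_add_ncard_compl {i | 0 < hOffset w i}
  rw [← hneg, ← hpos, ncard_union_eq h03, ncard_union_eq h12, Nat.card_zmod] at this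
  rw [Fin.sum_univ_four]
  omega

lemma setOf_toR_mem_ZqR_eq_corner {a b : ℤ} (ha : ∀ i, (w i).1 ≤ a ↔ 0 < hOffset w i)
    (hb : ∀ i, (w i).2 ≤ b ↔ 0 < vOffset w i) (j : Fin 4) :
    {i | toR (w i) ∈ ZqR j ((a : ℝ) + 1 / 2, (b : ℝ) + 1 / 2)} = corner w j := by
  ext i
  have := hw.hOffset_ne_zero i
  have := hw.vOffset_ne_zero i
  have := ha i
  have := hb i
  fin_cases j <;>
    simp only [ZqR, toR, corner, mem_ofPred_eq, Int.cast_le_add_half_iff,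
      Int.add_half_le_cast_iff] <;> omega

end IsClosedSquaredSpiral

lemma IsWindow.pos_turn_iff {m : ℕ} {w : ZMod m → ℤ × ℤ} (hwin : IsWindow w) (i j : ZMod m) :
    0 < turn w i ↔ 0 < turn w j := by
  rcases hwin with h | h
  · exact iff_of_true (h i) (h j)
  · exact iff_of_false (h i).not_gt (h j).not_gt

namespace IsClosedSquaredSpiral

variable {m : ℕ} {w : ZMod m → ℤ × ℤ} (hw : IsClosedSquaredSpiral w) (hwin : IsWindow w)
include hw hwin

lemma even_iff_even_iff_of_isWindow (i j : ZMod m) :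
    (Even i.val ↔ Even j.val) ↔
      (0 < hOffset w i * vOffset w i ↔ 0 < hOffset w j * vOffset w j) := by
  have hturn := hwin.pos_turn_iff i j
  rw [hw.turn_eq, hw.turn_eq] at hturn
  have hi := mul_ne_zero (hw.hOffset_ne_zero i) (hw.vOffset_ne_zero i)
  have hj := mul_ne_zero (hw.hOffset_ne_zero j) (hw.vOffset_ne_zero j)
  generalize hOffset w i * vOffset w i = P at *
  generalize hOffset w j * vOffset w j = Q at *
  by_cases hi' : Even i.val <;> by_cases hj' : Even j.val <;>
    simp only [hi', hj', if_true, if_false, neg_pos, iff_true, true_iff, iff_false, false_iff,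
      not_true_eq_false, not_iff] at hturn ⊢ <;> omega

lemma pos_vOffset_hNbr_iff (i : ZMod m) : 0 < vOffset w (hNbr i) ↔ 0 < vOffset w i := by
  have h := hw.even_iff_even_iff_of_isWindow hwin i (hNbr i)
  rw [hw.hOffset_hNbr, hw.even_hNbr_iff, neg_mul, neg_pos] at h
  have := hw.vOffset_ne_zero i
  have := hw.vOffset_ne_zero (hNbr i)
  rcases lt_or_gt_of_ne (hw.hOffset_ne_zero i) with ha | ha <;>
    simp only [iff_not_self, false_iff, mul_neg_iff, mul_pos_iff, ha, ha.not_gt, true_and,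
      false_and, or_false, false_or] at h <;> omega

lemma pos_hOffset_vNbr_iff (i : ZMod m) : 0 < hOffset w (vNbr i) ↔ 0 < hOffset w i := by
  have h := hw.even_iff_even_iff_of_isWindow hwin i (vNbr i)
  rw [hw.vOffset_vNbr, hw.even_vNbr_iff, mul_neg, neg_pos] at h
  have := hw.hOffset_ne_zero i
  have := hw.hOffset_ne_zero (vNbr i)
  rcases lt_or_gt_of_ne (hw.vOffset_ne_zero i) with hb | hb <;>
    simp only [iff_not_self, false_iff, mul_neg_iff, mul_pos_iff, hb, hb.not_gt, and_true,
      and_false, or_false, false_or] at h <;> omega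

lemma hNbr_mem_corner_one_iff (i : ZMod m) : hNbr i ∈ corner w 1 ↔ i ∈ corner w 0 := by
  have := hw.pos_vOffset_hNbr_iff hwin i
  have := hw.vOffset_ne_zero i
  have := hw.vOffset_ne_zero (hNbr i)
  simp only [corner, mem_ofPred_eq, hw.hOffset_hNbr]
  omega

lemma hNbr_mem_corner_two_iff (i : ZMod m) : hNbr i ∈ corner w 2 ↔ i ∈ corner w 3 := by
  have := hw.pos_vOffset_hNbr_iff hwin i
  have := hw.vOffset_ne_zero i
  have := hw.vOffset_ne_zero (hNbr i)
  simp only [corner, mem_ofPred_eq, hw.hOffset_hNbr]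
  omega

lemma vNbr_mem_corner_three_iff (i : ZMod m) : vNbr i ∈ corner w 3 ↔ i ∈ corner w 0 := by
  have := hw.pos_hOffset_vNbr_iff hwin i
  have := hw.hOffset_ne_zero i
  have := hw.hOffset_ne_zero (vNbr i)
  simp only [corner, mem_ofPred_eq, hw.vOffset_vNbr]
  omega

lemma ncard_corner (j : Fin 4) : (corner w j).ncard = m / 4 := by
  have h01 : (corner w 0).ncard = (corner w 1).ncard := by
    rw [← hw.hNbr_involutive.ncard_preimage (corner w 1)]
    exact congrArg ncard (ext fun i => (hw.hNbr_mem_corner_one_iff hwin i).symm)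
  have h32 : (corner w 3).ncard = (corner w 2).ncard := by
    rw [← hw.hNbr_involutive.ncard_preimage (corner w 2)]
    exact congrArg ncard (ext fun i => (hw.hNbr_mem_corner_two_iff hwin i).symm)
  have h03 : (corner w 0).ncard = (corner w 3).ncard := by
    rw [← hw.vNbr_involutive.ncard_preimage (corner w 3)]
    exact congrArg ncard (ext fun i => (hw.vNbr_mem_corner_three_iff hwin i).symm)
  have := hw.sum_ncard_corner
  rw [Fin.sum_univ_four] at this
  fin_cases j <;> simp only [Fin.zero_eta, Fin.mk_one, Fin.reduceFinMk] <;> omega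

end IsClosedSquaredSpiral

lemma exists_free_quadrant {m : ℕ} {w : ZMod m → ℤ × ℤ}
    (hconv : IsHvConvexSwitching (spiralEven w) (spiralOdd w)) (i : ZMod m) :
    ∃ j : Fin 4, ∀ k : ZMod m, ¬ (Even k.val ↔ Even i.val) → w k ∉ Zq j (w i) := by
  by_cases hi : Even i.val
  · obtain ⟨j, hj⟩ := hconv.2.1 (w i) ⟨i, hi, rfl⟩
    exact ⟨j, fun k hk hmem => hj.subset ⟨hmem, k, fun h => hk (iff_of_true h hi), rfl⟩⟩
  · obtain ⟨j, hj⟩ := hconv.2.2 (w i) ⟨i, hi, rfl⟩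
    exact ⟨j, fun k hk hmem => hj.subset ⟨hmem, k, by tauto, rfl⟩⟩

namespace IsClosedSquaredSpiral

variable {m : ℕ} {w : ZMod m → ℤ × ℤ} (hw : IsClosedSquaredSpiral w)
include hw

lemma eq_of_nbrs_notMem_Zq {i : ZMod m} {j j' : Fin 4} (hi : i ∈ corner w j)
    (hh : w (hNbr i) ∉ Zq j' (w i)) (hv : w (vNbr i) ∉ Zq j' (w i)) : j' = j := by
  have hh' := (hw.hNbr_horizontal i).1
  have hv' := (hw.vNbr_vertical i).1
  fin_cases j <;> fin_cases j' <;> simp_all [corner, Zq, hOffset, vOffset] <;> omega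

lemma notMem_Zq_of_mem_corner (hconv : IsHvConvexSwitching (spiralEven w) (spiralOdd w))
    {i k : ZMod m} {j : Fin 4} (hi : i ∈ corner w j) (hk : ¬ (Even k.val ↔ Even i.val)) :
    w k ∉ Zq j (w i) := by
  obtain ⟨j', hj'⟩ := exists_free_quadrant hconv i
  obtain rfl := hw.eq_of_nbrs_notMem_Zq hi
    (hj' _ (by rw [hw.even_hNbr_iff]; exact not_iff_self))
    (hj' _ (by rw [hw.even_vNbr_iff]; exact not_iff_self))
  exact hj' k hk

variable (hwin : IsWindow w)
include hwin

lemma exists_lower_endpoint (i : ZMod m) :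
    ∃ i', (w i').1 = (w i).1 ∧ (0 < hOffset w i' ↔ 0 < hOffset w i) ∧ 0 < vOffset w i' := by
  rcases lt_or_gt_of_ne (hw.vOffset_ne_zero i) with h | h
  · exact ⟨vNbr i, (hw.vNbr_vertical i).1, hw.pos_hOffset_vNbr_iff hwin i,
      by rw [hw.vOffset_vNbr]; omega⟩
  · exact ⟨i, rfl, Iff.rfl, h⟩

lemma exists_right_endpoint (i : ZMod m) :
    ∃ i', (w i').2 = (w i).2 ∧ (0 < vOffset w i' ↔ 0 < vOffset w i) ∧ hOffset w i' < 0 := by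
  rcases lt_or_gt_of_ne (hw.hOffset_ne_zero i) with h | h
  · exact ⟨i, rfl, Iff.rfl, h⟩
  · exact ⟨hNbr i, (hw.hNbr_horizontal i).1, hw.pos_vOffset_hNbr_iff hwin i,
      by rw [hw.hOffset_hNbr]; omega⟩

variable (hconv : IsHvConvexSwitching (spiralEven w) (spiralOdd w))
include hconv

lemma fst_lt_fst_of_mem_corner {p q : ZMod m} (hp : p ∈ corner w 0) (hq : q ∈ corner w 1) :
    (w p).1 < (w q).1 := by
  have hpar : ¬ (Even q.val ↔ Even p.val) := by
    rw [hw.even_iff_even_iff_of_isWindow hwin]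
    exact fun h => (h.2 (mul_pos hp.1 hp.2)).not_gt (mul_neg_of_neg_of_pos hq.1 hq.2)
  exact fst_lt_of_notMem_Zq (hw.notMem_Zq_of_mem_corner hconv hp hpar)
    (hw.notMem_Zq_of_mem_corner hconv hq (mt Iff.symm hpar))

lemma snd_lt_snd_of_mem_corner {q r : ZMod m} (hq : q ∈ corner w 1) (hr : r ∈ corner w 2) :
    (w q).2 < (w r).2 := by
  have hpar : ¬ (Even r.val ↔ Even q.val) := by
    rw [hw.even_iff_even_iff_of_isWindow hwin]
    exact fun h => (h.1 (mul_pos_of_neg_of_neg hr.1 hr.2)).not_gt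
      (mul_neg_of_neg_of_pos hq.1 hq.2)
  exact snd_lt_of_notMem_Zq (hw.notMem_Zq_of_mem_corner hconv hq hpar)
    (hw.notMem_Zq_of_mem_corner hconv hr (mt Iff.symm hpar))

lemma fst_lt_fst {i k : ZMod m} (hk : 0 < hOffset w k) (hi : hOffset w i < 0) :
    (w k).1 < (w i).1 := by
  obtain ⟨k', hkx, hk', hkv⟩ := hw.exists_lower_endpoint hwin k
  obtain ⟨i', hix, hi', hiv⟩ := hw.exists_lower_endpoint hwin i
  have := hw.hOffset_ne_zero i'
  rw [← hkx, ← hix]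
  exact hw.fst_lt_fst_of_mem_corner hwin hconv ⟨hk'.2 hk, hkv⟩ ⟨by omega, hiv⟩

lemma snd_lt_snd {i k : ZMod m} (hk : 0 < vOffset w k) (hi : vOffset w i < 0) :
    (w k).2 < (w i).2 := by
  obtain ⟨k', hky, hk', hkh⟩ := hw.exists_right_endpoint hwin k
  obtain ⟨i', hiy, hi', hih⟩ := hw.exists_right_endpoint hwin i
  have := hw.vOffset_ne_zero i'
  rw [← hky, ← hiy]
  exact hw.snd_lt_snd_of_mem_corner hwin hconv ⟨hkh, hk'.2 hk⟩ ⟨hih, by omega⟩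

end IsClosedSquaredSpiral

/-- if a window on `m` vertices is an hv-convex switching, then there is a
point `x ∈ ℝ²`, avoiding all horizontal and vertical lines through vertices, such that
every closed quadrant `Z_i(x)` contains exactly `m / 4` vertices of the spiral. -/
theorem stmt9 (m : ℕ) (w : ZMod m → ℤ × ℤ) (hw : IsClosedSquaredSpiral w)
    (hwin : IsWindow w)
    (hconv : IsHvConvexSwitching (spiralEven w) (spiralOdd w)) :
    ∃ x : ℝ × ℝ, (∀ i : ZMod m, x.1 ≠ ((w i).1 : ℝ) ∧ x.2 ≠ ((w i).2 : ℝ)) ∧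
      ∀ j : Fin 4, {i : ZMod m | toR (w i) ∈ ZqR j x}.ncard = m / 4 := by
  have := hw.neZero
  obtain ⟨a, ha⟩ := exists_le_iff_of_forall_lt (fun i => (w i).1) (fun i => 0 < hOffset w i)
    fun k i hk hi => hw.fst_lt_fst hwin hconv hk ((not_lt.1 hi).lt_of_ne (hw.hOffset_ne_zero i))
  obtain ⟨b, hb⟩ := exists_le_iff_of_forall_lt (fun i => (w i).2) (fun i => 0 < vOffset w i)
    fun k i hk hi => hw.snd_lt_snd hwin hconv hk ((not_lt.1 hi).lt_of_ne (hw.vOffset_ne_zero i))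
  refine ⟨((a : ℝ) + 1 / 2, (b : ℝ) + 1 / 2),
    fun i => ⟨Int.add_half_ne_cast _ _, Int.add_half_ne_cast _ _⟩, fun j => ?_⟩
  rw [hw.setOf_toR_mem_ZqR_eq_corner ha hb, hw.ncard_corner hwin]
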